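/- (Restricted Ackermann Lemma for descriptive frames) Let F = (W, R, 𝕎) be a descriptive frame or a Kripke frame (𝕎 = 𝒫(W)). Let A be a syntactically closed ML⁺-formula not containing p, and B(p) a syntactically open ML⁺-formula downwards monotone in p, with variables among q₁,…,qₙ,p and nominals among i₁,…,i_m. Then for all admissible Q₁,…,Qₙ ∈ 𝕎 and x₁,…,x_m ∈ W: B(A) = W (i.e., the extension of B with A substituted for p is all of W) if and only if there exists an admissible set P ∈ 𝕎 with A ⊆ P and B(P) = W (extensions computed with parameters Q₁,…,Qₙ,{x₁},…,{x_m}). -/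

import Mathlib

/-- The diamond set operator: `◇A = {w : ∃v, R w v ∧ v ∈ A}`. -/
def diaOp {W : Type} (R : W → W → Prop) (A : Set W) : Set W := {w | ∃ v, R w v ∧ v ∈ A}

/-- The box set operator: `□A = {w : ∀v, R w v → v ∈ A}`. -/
def boxOp {W : Type} (R : W → W → Prop) (A : Set W) : Set W := {w | ∀ v, R w v → v ∈ A}

/-- The inverse diamond set operator: `◇⁻¹A = {w : ∃v ∈ A, R v w} = R(A)`. -/
def idiaOp {W : Type} (R : W → W → Prop) (A : Set W) : Set W := {w | ∃ v, R v w ∧ v ∈ A}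

/-- The inverse box set operator: `□⁻¹A = {w : ∀v, R v w → v ∈ A}`. -/
def iboxOp {W : Type} (R : W → W → Prop) (A : Set W) : Set W := {w | ∀ v, R v w → v ∈ A}
/-- A general frame: a Kripke frame together with a Boolean algebra of
admissible subsets closed under the diamond operator. -/
structure GenFrame (W : Type) where
  R : W → W → Prop
  adm : Set (Set W)
  univ_mem : Set.univ ∈ adm
  compl_mem : ∀ X ∈ adm, Xᶜ ∈ adm
  inter_mem : ∀ X ∈ adm, ∀ Y ∈ adm, X ∩ Y ∈ adm
  dia_mem : ∀ X ∈ adm, diaOp R X ∈ adm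

/-- The topology generated by the admissible sets as a base of clopen sets. -/
def GenFrame.top {W : Type} (F : GenFrame W) : TopologicalSpace W :=
  TopologicalSpace.generateFrom F.adm

/-- Differentiated: distinct points are separated by admissible sets. -/
def GenFrame.differentiated {W : Type} (F : GenFrame W) : Prop :=
  ∀ x y : W, x ≠ y → ∃ X ∈ F.adm, x ∈ X ∧ y ∉ X

/-- Tight: `R x y` iff `x ∈ ◇Y` for every admissible `Y` containing `y`. -/
def GenFrame.tight {W : Type} (F : GenFrame W) : Prop :=
  ∀ x y : W, F.R x y ↔ ∀ Y ∈ F.adm, y ∈ Y → x ∈ diaOp F.R Y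

/-- Compact: every family of admissible sets with the finite intersection
property has nonempty intersection. -/
def GenFrame.cpt {W : Type} (F : GenFrame W) : Prop :=
  ∀ C : Set (Set W), C ⊆ F.adm →
    (∀ D : Set (Set W), D ⊆ C → D.Finite → (⋂₀ D).Nonempty) →
    (⋂₀ C).Nonempty

/-- A descriptive frame is a differentiated, tight and compact general frame. -/
def GenFrame.descriptive {W : Type} (F : GenFrame W) : Prop :=
  F.differentiated ∧ F.tight ∧ F.cpt
/-- Formulas of the extended modal language ML⁺, with nominals and the
inverse modalities `◇⁻¹` (`idia`) and `□⁻¹` (`ibox`). -/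
inductive MFp : Type where
  | bot
  | top
  | var (p : Nat)
  | nom (k : Nat)
  | neg (φ : MFp)
  | or (φ ψ : MFp)
  | and (φ ψ : MFp)
  | dia (φ : MFp)
  | box (φ : MFp)
  | idia (φ : MFp)
  | ibox (φ : MFp)

def MFp.imp (φ ψ : MFp) : MFp := MFp.or (MFp.neg φ) ψ

/-- Satisfaction for ML⁺: `V` interprets propositional variables,
`g` assigns a world (i.e. a singleton) to each nominal. -/
def satp {W : Type} (R : W → W → Prop) (V : Nat → Set W) (g : Nat → W) : MFp → W → Prop
  | .bot, _ => False
  | .top, _ => True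
  | .var p, w => w ∈ V p
  | .nom k, w => w = g k
  | .neg φ, w => ¬ satp R V g φ w
  | .or φ ψ, w => satp R V g φ w ∨ satp R V g ψ w
  | .and φ ψ, w => satp R V g φ w ∧ satp R V g ψ w
  | .dia φ, w => ∃ v, R w v ∧ satp R V g φ v
  | .box φ, w => ∀ v, R w v → satp R V g φ v
  | .idia φ, w => ∃ v, R v w ∧ satp R V g φ v
  | .ibox φ, w => ∀ v, R v w → satp R V g φ v
mutual
/-- Syntactically closed: all occurrences of nominals and `◇⁻¹` are positive,
and all occurrences of `□⁻¹` are negative. -/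
def synClosed : MFp → Prop
  | .bot => True
  | .top => True
  | .var _ => True
  | .nom _ => True
  | .neg φ => synOpen φ
  | .or φ ψ => synClosed φ ∧ synClosed ψ
  | .and φ ψ => synClosed φ ∧ synClosed ψ
  | .dia φ => synClosed φ
  | .box φ => synClosed φ
  | .idia φ => synClosed φ
  | .ibox _ => False

/-- Syntactically open: all occurrences of nominals and `◇⁻¹` are negative,
and all occurrences of `□⁻¹` are positive. -/
def synOpen : MFp → Prop
  | .bot => True
  | .top => True
  | .var _ => True
  | .nom _ => False
  | .neg φ => synClosed φ
  | .or φ ψ => synOpen φ ∧ synOpen ψ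
  | .and φ ψ => synOpen φ ∧ synOpen ψ
  | .dia φ => synOpen φ
  | .box φ => synOpen φ
  | .idia _ => False
  | .ibox φ => synOpen φ
end

/-- The propositional variable `p` occurs in the formula. -/
def occursP (p : Nat) : MFp → Prop
  | .bot => False
  | .top => False
  | .var q => q = p
  | .nom _ => False
  | .neg φ => occursP p φ
  | .or φ ψ => occursP p φ ∨ occursP p ψ
  | .and φ ψ => occursP p φ ∨ occursP p ψ
  | .dia φ => occursP p φ
  | .box φ => occursP p φ
  | .idia φ => occursP p φ
  | .ibox φ => occursP p φ

/-- Downwards monotone in `p`: shrinking the set interpreting `p` preserves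
truth, in every model. -/
def downMonoP (p : Nat) (φ : MFp) : Prop :=
  ∀ (W : Type) (R : W → W → Prop) (V V' : Nat → Set W) (g : Nat → W),
    V' p ⊆ V p → (∀ q, q ≠ p → V q = V' q) →
    ∀ w : W, satp R V g φ w → satp R V' g φ w

/-! Right to left is downward monotonicity of `B`. For left to right on a descriptive frame,
`⟦A⟧` is closed, hence the intersection of the directed family of admissible `P ⊇ ⟦A⟧`. Since `B`
is monotone only semantically, Esakia's lemma does not apply to it; instead, if every `B(P)`
failed at some `w_P`, we build one model in which `p` is a generic limit of the `P`: the
ultrafilter extension of the disjoint union of the models `(W, R, V[p := P])`, restricted to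
ultrafilters lying over an ultrafilter `U` on the `P` that contains every `{P | P ⊆ N}`.
Its truth lemma says that `B` fails at the point `(w_P)_U`. On the other hand compactness and
differentiatedness give a standard-part map from this model onto `W`, tightness makes it a
forth-and-back map, so truth of the syntactically open `B(⟦A⟧)` transfers to the model with `p`
read as the preimage of `⟦A⟧`; this contains the generic valuation of `p`, and monotonicity
yields `B` at `(w_P)_U`. -/

open Filter Set Function

theorem diaOp_mono {α : Type} (r : α → α → Prop) {S T : Set α} (h : S ⊆ T) :
    diaOp r S ⊆ diaOp r T := fun _ ⟨v, hv, hvS⟩ => ⟨v, hv, h hvS⟩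

theorem compl_diaOp {α : Type} (r : α → α → Prop) (S : Set α) :
    (diaOp r S)ᶜ = boxOp r Sᶜ := by
  ext; simp [diaOp, boxOp]

theorem compl_idiaOp {α : Type} (r : α → α → Prop) (S : Set α) :
    (idiaOp r S)ᶜ = iboxOp r Sᶜ := by
  ext; simp [idiaOp, iboxOp]

theorem setOf_satp_box {W : Type} (R : W → W → Prop) (V : ℕ → Set W) (g : ℕ → W) (φ : MFp) :
    {w | satp R V g (.box φ) w} = (diaOp R {w | satp R V g φ w}ᶜ)ᶜ := by
  rw [compl_diaOp, compl_compl]; rfl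

theorem setOf_satp_ibox {W : Type} (R : W → W → Prop) (V : ℕ → Set W) (g : ℕ → W) (φ : MFp) :
    {w | satp R V g (.ibox φ) w} = (idiaOp R {w | satp R V g φ w}ᶜ)ᶜ := by
  rw [compl_idiaOp, compl_compl]; rfl

namespace GenFrame

variable {W : Type} (F : GenFrame W)

theorem empty_mem : ∅ ∈ F.adm := by
  simpa using F.compl_mem _ F.univ_mem

theorem union_mem {X Y : Set W} (hX : X ∈ F.adm) (hY : Y ∈ F.adm) : X ∪ Y ∈ F.adm := by
  simpa [compl_inter] using F.compl_mem _ (F.inter_mem _ (F.compl_mem _ hX) _ (F.compl_mem _ hY))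

/-- Closedness in `F.top`, in the form used here: `K` is the intersection of its admissible
supersets. -/
def IsAdmClosed (K : Set W) : Prop :=
  ∀ x ∉ K, ∃ N ∈ F.adm, K ⊆ N ∧ x ∉ N

/-- For `K = {x}` this is the neighbourhood filter of `x` in `F.top`. -/
def admFilter (K : Set W) : Filter W :=
  ⨅ N ∈ {N | N ∈ F.adm ∧ K ⊆ N}, 𝓟 N

theorem hasBasis_admFilter (K : Set W) :
    (F.admFilter K).HasBasis (fun N => N ∈ F.adm ∧ K ⊆ N) id :=
  hasBasis_biInf_principal
    (fun M hM N hN => ⟨M ∩ N, ⟨F.inter_mem _ hM.1 _ hN.1, subset_inter hM.2 hN.2⟩,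
      inter_subset_left, inter_subset_right⟩)
    ⟨univ, F.univ_mem, subset_univ K⟩

theorem mem_admFilter {K N : Set W} (hN : N ∈ F.adm) (hKN : K ⊆ N) : N ∈ F.admFilter K :=
  (F.hasBasis_admFilter K).mem_of_mem ⟨hN, hKN⟩

theorem exists_forall_mem_of_cpt (hc : F.cpt) (f : Filter W) [f.NeBot] :
    ∃ x, ∀ N ∈ F.adm, N ∈ f → x ∈ N := by
  obtain ⟨x, hx⟩ := hc {N | N ∈ F.adm ∧ N ∈ f} (fun N hN => hN.1) fun D hD hDfin =>
    Filter.nonempty_of_mem ((sInter_mem hDfin).2 fun N hN => (hD hN).2)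
  exact ⟨x, fun N hN hNf => hx N ⟨hN, hNf⟩⟩

theorem isAdmClosed_of_mem {N : Set W} (hN : N ∈ F.adm) : F.IsAdmClosed N :=
  fun _ hx => ⟨N, hN, subset_rfl, hx⟩

theorem isAdmClosed_singleton (hd : F.differentiated) (y : W) : F.IsAdmClosed {y} := by
  intro x hx
  obtain ⟨N, hN, hyN, hxN⟩ := hd y x (Ne.symm hx)
  exact ⟨N, hN, singleton_subset_iff.2 hyN, hxN⟩

section

variable {F}

theorem IsAdmClosed.mem_of_forall {K : Set W} (hK : F.IsAdmClosed K) {x : W}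
    (hx : ∀ N ∈ F.adm, N ∈ F.admFilter K → x ∈ N) : x ∈ K := by
  by_contra hxK
  obtain ⟨N, hN, hKN, hxN⟩ := hK x hxK
  exact hxN (hx N hN (F.mem_admFilter hN hKN))

theorem IsAdmClosed.union {K L : Set W} (hK : F.IsAdmClosed K) (hL : F.IsAdmClosed L) :
    F.IsAdmClosed (K ∪ L) := by
  intro x hx
  obtain ⟨M, hM, hKM, hxM⟩ := hK x fun h => hx (Or.inl h)
  obtain ⟨N, hN, hLN, hxN⟩ := hL x fun h => hx (Or.inr h)
  exact ⟨M ∪ N, F.union_mem hM hN, union_subset_union hKM hLN, fun h => h.elim hxM hxN⟩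

theorem IsAdmClosed.inter {K L : Set W} (hK : F.IsAdmClosed K) (hL : F.IsAdmClosed L) :
    F.IsAdmClosed (K ∩ L) := by
  intro x hx
  by_cases hxK : x ∈ K
  · obtain ⟨N, hN, hLN, hxN⟩ := hL x fun h => hx ⟨hxK, h⟩
    exact ⟨N, hN, inter_subset_right.trans hLN, hxN⟩
  · obtain ⟨N, hN, hKN, hxN⟩ := hK x hxK
    exact ⟨N, hN, inter_subset_left.trans hKN, hxN⟩

end

theorem isAdmClosed_compl_diaOp {U : Set W} (hU : F.IsAdmClosed Uᶜ) :
    F.IsAdmClosed (diaOp F.R U)ᶜ := by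
  intro x hx
  obtain ⟨z, hxz, hzU⟩ := not_not.1 hx
  obtain ⟨N, hN, hUN, hzN⟩ := hU z (not_not.2 hzU)
  refine ⟨(diaOp F.R Nᶜ)ᶜ, F.compl_mem _ (F.dia_mem _ (F.compl_mem _ hN)), ?_,
    fun h => h ⟨z, hxz, hzN⟩⟩
  exact compl_subset_compl.2 (diaOp_mono _ (compl_subset_comm.1 hUN))

theorem isAdmClosed_diaOp (ht : F.tight) (hc : F.cpt) {K : Set W} (hK : F.IsAdmClosed K) :
    F.IsAdmClosed (diaOp F.R K) := by
  intro y hy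
  by_contra! hsep
  have : (F.admFilter K ⊓ 𝓟 {z | F.R y z}).NeBot :=
    (F.hasBasis_admFilter K).inf_principal_neBot_iff.2 fun M ⟨hM, hKM⟩ => by
      obtain ⟨z, hyz, hzM⟩ := hsep _ (F.dia_mem _ hM) (diaOp_mono _ hKM)
      exact ⟨z, hzM, hyz⟩
  obtain ⟨z, hz⟩ := F.exists_forall_mem_of_cpt hc (F.admFilter K ⊓ 𝓟 {z | F.R y z})
  refine hy ⟨z, ?_, hK.mem_of_forall fun N hN hNK => hz N hN (mem_inf_of_left hNK)⟩
  refine (ht y z).2 fun Y hY hzY => ?_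
  by_contra hyY
  exact hz Yᶜ (F.compl_mem _ hY) (mem_inf_of_right fun w hyw hwY => hyY ⟨w, hyw, hwY⟩) hzY

theorem isAdmClosed_idiaOp (ht : F.tight) (hc : F.cpt) {K : Set W} (hK : F.IsAdmClosed K) :
    F.IsAdmClosed (idiaOp F.R K) := by
  intro x hx
  by_contra! hsep
  let f := F.admFilter K ⊓ (F.admFilter {x}).lift' (diaOp F.R)
  have : f.NeBot := by
    refine ((F.hasBasis_admFilter K).inf_basis_neBot_iff
      ((F.hasBasis_admFilter {x}).lift' fun _ _ => diaOp_mono F.R)).2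
      fun M ⟨_, hKM⟩ Y ⟨hY, hxY⟩ => ?_
    by_contra hKY
    refine hsep Yᶜ (F.compl_mem _ hY) ?_ (singleton_subset_iff.1 hxY)
    rintro a ⟨z, hza, hzK⟩ haY
    exact hKY ⟨z, hKM hzK, a, hza, haY⟩
  obtain ⟨z, hz⟩ := F.exists_forall_mem_of_cpt hc f
  refine hx ⟨z, ?_, hK.mem_of_forall fun N hN hNK => hz N hN (mem_inf_of_left hNK)⟩
  exact (ht z x).2 fun Y hY hxY => hz _ (F.dia_mem _ hY)
    (mem_inf_of_right (mem_lift' (F.mem_admFilter hY (singleton_subset_iff.2 hxY))))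

theorem isAdmClosed_satp (hd : F.differentiated) (ht : F.tight) (hc : F.cpt)
    {V : ℕ → Set W} (hV : ∀ q, V q ∈ F.adm) (g : ℕ → W) (φ : MFp) :
    (synClosed φ → F.IsAdmClosed {w | satp F.R V g φ w}) ∧
      (synOpen φ → F.IsAdmClosed {w | satp F.R V g φ w}ᶜ) := by
  induction φ with
  | bot => exact ⟨fun _ => by simpa [satp] using F.isAdmClosed_of_mem F.empty_mem,
      fun _ => by simpa [satp] using F.isAdmClosed_of_mem F.univ_mem⟩
  | top => exact ⟨fun _ => by simpa [satp] using F.isAdmClosed_of_mem F.univ_mem,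
      fun _ => by simpa [satp] using F.isAdmClosed_of_mem F.empty_mem⟩
  | var q => exact ⟨fun _ => F.isAdmClosed_of_mem (hV q),
      fun _ => F.isAdmClosed_of_mem (F.compl_mem _ (hV q))⟩
  | nom k => exact ⟨fun _ => F.isAdmClosed_singleton hd (g k), False.elim⟩
  | neg φ ih => exact ⟨ih.2, fun h => by simpa [satp, ← compl_ofPred] using ih.1 h⟩
  | or φ ψ ihφ ihψ =>
    refine ⟨fun h => (ihφ.1 h.1).union (ihψ.1 h.2), fun h => ?_⟩
    have := (ihφ.2 h.1).inter (ihψ.2 h.2)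
    rwa [← compl_union] at this
  | and φ ψ ihφ ihψ =>
    refine ⟨fun h => (ihφ.1 h.1).inter (ihψ.1 h.2), fun h => ?_⟩
    have := (ihφ.2 h.1).union (ihψ.2 h.2)
    rwa [← compl_inter] at this
  | dia φ ih => exact ⟨fun h => F.isAdmClosed_diaOp ht hc (ih.1 h),
      fun h => F.isAdmClosed_compl_diaOp (ih.2 h)⟩
  | box φ ih =>
    rw [setOf_satp_box]
    exact ⟨fun h => F.isAdmClosed_compl_diaOp (by simpa using ih.1 h),
      fun h => by simpa using F.isAdmClosed_diaOp ht hc (ih.2 h)⟩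
  | idia φ ih => exact ⟨fun h => F.isAdmClosed_idiaOp ht hc (ih.1 h), False.elim⟩
  | ibox φ ih =>
    rw [setOf_satp_ibox]
    exact ⟨False.elim, fun h => by simpa using F.isAdmClosed_idiaOp ht hc (ih.2 h)⟩

end GenFrame

section UltrafilterExtension

variable {α : Type} (r : α → α → Prop)

/-- The accessibility relation of the ultrafilter extension of `(α, r)`. -/
def ueRel (u v : Ultrafilter α) : Prop :=
  ∀ T, boxOp r T ∈ u → T ∈ v

variable {r}

theorem diaOp_mem_of_ueRel {u v : Ultrafilter α} (huv : ueRel r u v) {S : Set α} (hS : S ∈ v) :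
    diaOp r S ∈ u := by
  by_contra h
  rw [← Ultrafilter.compl_mem_iff_notMem, compl_diaOp] at h
  exact Ultrafilter.compl_mem_iff_notMem.1 (huv _ h) hS

theorem exists_ueRel_le (u : Ultrafilter α) (f : Filter α) (hf : ∀ S ∈ f, diaOp r S ∈ u) :
    ∃ v : Ultrafilter α, ueRel r u v ∧ ↑v ≤ f := by
  let L := (u : Filter α).rmap {x | r x.1 x.2} ⊓ f
  have : L.NeBot := by
    refine inf_neBot_iff.2 fun T hT S hS => ?_
    obtain ⟨a, haT, b, hab, hbS⟩ := Ultrafilter.nonempty_of_mem (inter_mem hT (hf S hS))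
    exact ⟨b, haT hab, hbS⟩
  exact ⟨Ultrafilter.of L, fun T hT => Ultrafilter.of_le L (mem_inf_of_left hT),
    (Ultrafilter.of_le L).trans inf_le_right⟩

theorem diaOp_mem_iff_exists_ueRel (u : Ultrafilter α) (S : Set α) :
    diaOp r S ∈ u ↔ ∃ v, ueRel r u v ∧ S ∈ v := by
  refine ⟨fun h => ?_, fun ⟨v, huv, hS⟩ => diaOp_mem_of_ueRel huv hS⟩
  obtain ⟨v, huv, hv⟩ := exists_ueRel_le u (𝓟 S) fun S' hS' => mem_of_superset h (diaOp_mono r hS')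
  exact ⟨v, huv, le_principal_iff.1 hv⟩

theorem ueRel.flip {u v : Ultrafilter α} (huv : ueRel r u v) : ueRel (flip r) v u := by
  intro T hT
  by_contra hTu
  rw [← Ultrafilter.compl_mem_iff_notMem] at hTu
  have : boxOp r (idiaOp r Tᶜ) ∈ u := mem_of_superset hTu fun a ha b hab => ⟨a, hab, ha⟩
  obtain ⟨b, hbT, a, hab, haT⟩ := Ultrafilter.nonempty_of_mem (inter_mem hT (huv _ this))
  exact haT (hbT a hab)

theorem ueRel_flip_iff {u v : Ultrafilter α} : ueRel (flip r) v u ↔ ueRel r u v :=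
  ⟨fun h => h.flip, ueRel.flip⟩

theorem idiaOp_mem_iff_exists_ueRel (u : Ultrafilter α) (S : Set α) :
    idiaOp r S ∈ u ↔ ∃ v, ueRel r v u ∧ S ∈ v := by
  simp only [← ueRel_flip_iff (r := r)]
  exact diaOp_mem_iff_exists_ueRel u S

end UltrafilterExtension

section UltraWorld

variable {W ι : Type}

def sumRel (R : W → W → Prop) (a b : W × ι) : Prop :=
  a.2 = b.2 ∧ R a.1 b.1

def sumTruth (R : W → W → Prop) (V : ι → ℕ → Set W) (g : ℕ → W) (φ : MFp) : Set (W × ι) :=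
  {a | satp R (V a.2) g φ a.1}

/-- Points of the ultrafilter extension of the disjoint union of `ι` copies of `(W, R)` that lie
over `U`; over `U`, the nominal points `ultraNom U g k` are the only ones containing `{g k} × ι`. -/
@[ext]
structure UltraWorld (W : Type) (U : Ultrafilter ι) where
  ult : Ultrafilter (W × ι)
  tendsto_snd : Tendsto Prod.snd (ult : Filter (W × ι)) U

variable {U : Ultrafilter ι}

def UltraWorld.ofFun (U : Ultrafilter ι) (f : ι → W) : UltraWorld W U :=
  ⟨U.map fun i => (f i, i), by rw [Ultrafilter.coe_map]; exact tendsto_map'_iff.2 tendsto_id⟩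

theorem UltraWorld.eq_ofFun_iff (u : UltraWorld W U) (f : ι → W) :
    u = UltraWorld.ofFun U f ↔ {a | a.1 = f a.2} ∈ u.ult := by
  refine ⟨fun h => ?_, fun h => UltraWorld.ext (Ultrafilter.eq_of_le fun S hS => ?_)⟩
  · subst h
    exact Ultrafilter.mem_map.2 (univ_mem' fun _ => rfl)
  · refine mem_of_superset (inter_mem h (u.tendsto_snd (Ultrafilter.mem_map.1 hS))) ?_
    rintro ⟨w, i⟩ ⟨hw : w = f i, hS⟩
    rwa [hw]

def ultraRel (R : W → W → Prop) (u v : UltraWorld W U) : Prop :=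
  ueRel (sumRel R) u.ult v.ult

def ultraVal (V : ι → ℕ → Set W) (q : ℕ) : Set (UltraWorld W U) :=
  {u | {a | a.1 ∈ V a.2 q} ∈ u.ult}

def ultraNom (U : Ultrafilter ι) (g : ℕ → W) (k : ℕ) : UltraWorld W U :=
  UltraWorld.ofFun U fun _ => g k

theorem tendsto_snd_of_ueRel {r : W × ι → W × ι → Prop} (hr : ∀ a b, r a b → a.2 = b.2)
    {u v : Ultrafilter (W × ι)} (huv : ueRel r u v) (hu : Tendsto Prod.snd (u : Filter (W × ι)) U) :
    Tendsto Prod.snd (v : Filter (W × ι)) U := fun E hE =>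
  huv _ (mem_of_superset (hu hE) fun a ha b hab => show b.2 ∈ E from hr a b hab ▸ ha)

variable (R : W → W → Prop)

theorem diaOp_sumRel_mem_iff (u : UltraWorld W U) (S : Set (W × ι)) :
    diaOp (sumRel R) S ∈ u.ult ↔ ∃ v : UltraWorld W U, ultraRel R u v ∧ S ∈ v.ult := by
  rw [diaOp_mem_iff_exists_ueRel]
  refine ⟨fun ⟨v, huv, hS⟩ =>
    ⟨⟨v, tendsto_snd_of_ueRel (fun _ _ h => h.1) huv u.tendsto_snd⟩, huv, hS⟩,
    fun ⟨v, huv, hS⟩ => ⟨v.ult, huv, hS⟩⟩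

theorem idiaOp_sumRel_mem_iff (u : UltraWorld W U) (S : Set (W × ι)) :
    idiaOp (sumRel R) S ∈ u.ult ↔ ∃ v : UltraWorld W U, ultraRel R v u ∧ S ∈ v.ult := by
  rw [idiaOp_mem_iff_exists_ueRel]
  refine ⟨fun ⟨v, hvu, hS⟩ =>
    ⟨⟨v, tendsto_snd_of_ueRel (fun _ _ h => h.1.symm) hvu.flip u.tendsto_snd⟩, hvu, hS⟩,
    fun ⟨v, hvu, hS⟩ => ⟨v.ult, hvu, hS⟩⟩

variable (V : ι → ℕ → Set W) (g : ℕ → W)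

theorem sumTruth_dia (φ : MFp) :
    sumTruth R V g (.dia φ) = diaOp (sumRel R) (sumTruth R V g φ) := by
  ext ⟨w, i⟩
  exact ⟨fun ⟨v, hv, h⟩ => ⟨(v, i), ⟨rfl, hv⟩, h⟩, fun ⟨⟨v, _⟩, ⟨rfl, hv⟩, h⟩ => ⟨v, hv, h⟩⟩

theorem sumTruth_idia (φ : MFp) :
    sumTruth R V g (.idia φ) = idiaOp (sumRel R) (sumTruth R V g φ) := by
  ext ⟨w, i⟩
  exact ⟨fun ⟨v, hv, h⟩ => ⟨(v, i), ⟨rfl, hv⟩, h⟩, fun ⟨⟨v, _⟩, ⟨rfl, hv⟩, h⟩ => ⟨v, hv, h⟩⟩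

theorem sumTruth_box (φ : MFp) :
    sumTruth R V g (.box φ) = (diaOp (sumRel R) (sumTruth R V g φ)ᶜ)ᶜ := by
  ext ⟨w, i⟩
  simp [sumTruth, diaOp, sumRel, satp]

theorem sumTruth_ibox (φ : MFp) :
    sumTruth R V g (.ibox φ) = (idiaOp (sumRel R) (sumTruth R V g φ)ᶜ)ᶜ := by
  ext ⟨w, i⟩
  simp [sumTruth, idiaOp, sumRel, satp]

theorem satp_ultra_iff_sumTruth_mem (φ : MFp) (u : UltraWorld W U) :
    satp (ultraRel R) (ultraVal V) (ultraNom U g) φ u ↔ sumTruth R V g φ ∈ u.ult := by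
  induction φ generalizing u with
  | bot => simp [satp, sumTruth]
  | top => exact ⟨fun _ => univ_mem, fun _ => trivial⟩
  | var q => rfl
  | nom k => exact u.eq_ofFun_iff _
  | neg φ ih => exact (not_congr (ih u)).trans Ultrafilter.compl_mem_iff_notMem.symm
  | or φ ψ ihφ ihψ => exact (or_congr (ihφ u) (ihψ u)).trans Ultrafilter.union_mem_iff.symm
  | and φ ψ ihφ ihψ => exact (and_congr (ihφ u) (ihψ u)).trans inter_mem_iff.symm
  | dia φ ih =>
    rw [sumTruth_dia, diaOp_sumRel_mem_iff]
    simp only [satp, ih]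
  | box φ ih =>
    rw [sumTruth_box, Ultrafilter.compl_mem_iff_notMem, diaOp_sumRel_mem_iff]
    simp [satp, ih, Ultrafilter.compl_mem_iff_notMem]
  | idia φ ih =>
    rw [sumTruth_idia, idiaOp_sumRel_mem_iff]
    simp only [satp, ih]
  | ibox φ ih =>
    rw [sumTruth_ibox, Ultrafilter.compl_mem_iff_notMem, idiaOp_sumRel_mem_iff]
    simp [satp, ih, Ultrafilter.compl_mem_iff_notMem]

end UltraWorld

namespace GenFrame

variable {W : Type} (F : GenFrame W)

theorem mem_iff_of_le_admFilter {u : Ultrafilter W} {x : W} (hu : ↑u ≤ F.admFilter {x})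
    {N : Set W} (hN : N ∈ F.adm) : x ∈ N ↔ N ∈ u := by
  have key {N : Set W} (hN : N ∈ F.adm) (hx : x ∈ N) : N ∈ u :=
    hu (F.mem_admFilter hN (singleton_subset_iff.2 hx))
  refine ⟨key hN, fun hNu => ?_⟩
  by_contra hx
  exact Ultrafilter.compl_mem_iff_notMem.1 (key (F.compl_mem _ hN) hx) hNu

theorem exists_le_admFilter (hc : F.cpt) (u : Ultrafilter W) : ∃ x, ↑u ≤ F.admFilter {x} := by
  obtain ⟨x, hx⟩ := F.exists_forall_mem_of_cpt hc u
  refine ⟨x, (F.hasBasis_admFilter {x}).ge_iff.2 fun N ⟨hN, hxN⟩ => ?_⟩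
  by_contra hNu
  exact hx Nᶜ (F.compl_mem _ hN) (Ultrafilter.compl_mem_iff_notMem.2 hNu)
    (singleton_subset_iff.1 hxN)

theorem eq_of_le_admFilter (hd : F.differentiated) {u : Ultrafilter W} {x y : W}
    (hx : ↑u ≤ F.admFilter {x}) (hy : ↑u ≤ F.admFilter {y}) : x = y := by
  by_contra hxy
  obtain ⟨X, hX, hxX, hyX⟩ := hd x y hxy
  exact Ultrafilter.compl_mem_iff_notMem.1 ((F.mem_iff_of_le_admFilter hy (F.compl_mem _ hX)).1 hyX)
    ((F.mem_iff_of_le_admFilter hx hX).1 hxX)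

section StandardPart

variable {ι : Type} {U : Ultrafilter ι} {st : UltraWorld W U → W}
  (hst : ∀ u, ↑(u.ult.map Prod.fst) ≤ F.admFilter {st u})
include hst

theorem rel_of_ultraRel (ht : F.tight) {u v : UltraWorld W U} (huv : ultraRel F.R u v) :
    F.R (st u) (st v) := by
  refine (ht _ _).2 fun Y hY hvY => (F.mem_iff_of_le_admFilter (hst u) (F.dia_mem _ hY)).2 ?_
  have := diaOp_mem_of_ueRel huv ((F.mem_iff_of_le_admFilter (hst v) hY).1 hvY)
  refine Ultrafilter.mem_map.2 (mem_of_superset this ?_)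
  rintro a ⟨b, ⟨-, hab⟩, hb⟩
  exact ⟨b.1, hab, hb⟩

theorem exists_ultraRel_of_rel (hd : F.differentiated) {u : UltraWorld W U} {y : W}
    (hy : F.R (st u) y) : ∃ v, ultraRel F.R u v ∧ st v = y := by
  obtain ⟨v, huv, hv⟩ := exists_ueRel_le (r := sumRel F.R) u.ult ((F.admFilter {y}).comap Prod.fst)
    fun S hS => by
      obtain ⟨N, ⟨hN, hyN⟩, hNS⟩ := ((F.hasBasis_admFilter {y}).comap Prod.fst).mem_iff.1 hS
      have : Prod.fst ⁻¹' diaOp F.R N ∈ u.ult :=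
        (F.mem_iff_of_le_admFilter (hst u) (F.dia_mem _ hN)).1 ⟨y, hy, singleton_subset_iff.1 hyN⟩
      refine mem_of_superset this ?_
      rintro a ⟨w, haw, hwN⟩
      exact ⟨(w, a.2), ⟨rfl, haw⟩, hNS hwN⟩
  let v' : UltraWorld W U := ⟨v, tendsto_snd_of_ueRel (fun _ _ h => h.1) huv u.tendsto_snd⟩
  refine ⟨v', huv, F.eq_of_le_admFilter hd (hst v') ?_⟩
  rw [Ultrafilter.coe_map]
  exact map_le_iff_le_comap.2 hv

theorem stdPart_ultraNom (hd : F.differentiated) (g : ℕ → W) (k : ℕ) :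
    st (ultraNom U g k) = g k :=
  F.eq_of_le_admFilter hd (hst _) <| (F.hasBasis_admFilter _).ge_iff.2 fun _ ⟨_, hN⟩ =>
    Ultrafilter.mem_map.2 (Ultrafilter.mem_map.2 (univ_mem' fun _ => hN rfl))

theorem satp_transfer (hd : F.differentiated) (ht : F.tight) (V : ℕ → Set W) (g : ℕ → W)
    (φ : MFp) (u : UltraWorld W U) :
    (synOpen φ → satp F.R V g φ (st u) →
        satp (ultraRel F.R) (fun q => st ⁻¹' V q) (ultraNom U g) φ u) ∧
      (synClosed φ → satp (ultraRel F.R) (fun q => st ⁻¹' V q) (ultraNom U g) φ u →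
        satp F.R V g φ (st u)) := by
  induction φ generalizing u with
  | bot => exact ⟨fun _ h => h, fun _ h => h⟩
  | top => exact ⟨fun _ h => h, fun _ h => h⟩
  | var q => exact ⟨fun _ h => h, fun _ h => h⟩
  | nom k => exact ⟨False.elim, fun _ h => (congrArg st h).trans (F.stdPart_ultraNom hst hd g k)⟩
  | neg φ ih => exact ⟨fun h hW hK => hW ((ih u).2 h hK), fun h hK hW => hK ((ih u).1 h hW)⟩
  | or φ ψ ihφ ihψ =>
    exact ⟨fun h => Or.imp ((ihφ u).1 h.1) ((ihψ u).1 h.2),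
      fun h => Or.imp ((ihφ u).2 h.1) ((ihψ u).2 h.2)⟩
  | and φ ψ ihφ ihψ =>
    exact ⟨fun h => And.imp ((ihφ u).1 h.1) ((ihψ u).1 h.2),
      fun h => And.imp ((ihφ u).2 h.1) ((ihψ u).2 h.2)⟩
  | dia φ ih =>
    refine ⟨fun h ⟨y, hy, hφ⟩ => ?_, fun h ⟨v, huv, hφ⟩ =>
      ⟨st v, F.rel_of_ultraRel hst ht huv, (ih v).2 h hφ⟩⟩
    obtain ⟨v, huv, rfl⟩ := F.exists_ultraRel_of_rel hst hd hy
    exact ⟨v, huv, (ih v).1 h hφ⟩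
  | box φ ih =>
    refine ⟨fun h hW v huv => (ih v).1 h (hW _ (F.rel_of_ultraRel hst ht huv)),
      fun h hK y hy => ?_⟩
    obtain ⟨v, huv, rfl⟩ := F.exists_ultraRel_of_rel hst hd hy
    exact (ih v).2 h (hK v huv)
  | idia φ ih =>
    exact ⟨False.elim, fun h ⟨v, hvu, hφ⟩ =>
      ⟨st v, F.rel_of_ultraRel hst ht hvu, (ih v).2 h hφ⟩⟩
  | ibox φ ih =>
    exact ⟨fun h hW v hvu => (ih v).1 h (hW _ (F.rel_of_ultraRel hst ht hvu)), False.elim⟩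

end StandardPart

theorem stdPart_mem_of_generic {K : Set W} (hK : F.IsAdmClosed K)
    {U : Ultrafilter {P : Set W // P ∈ F.adm ∧ K ⊆ P}} (hU : ∀ j, Iic j ∈ U)
    {st : UltraWorld W U → W} (hst : ∀ u, ↑(u.ult.map Prod.fst) ≤ F.admFilter {st u})
    {u : UltraWorld W U} (hu : {a | a.1 ∈ a.2.1} ∈ u.ult) : st u ∈ K := by
  by_contra hK'
  obtain ⟨N, hN, hKN, hN'⟩ := hK _ hK'
  have hsmall : Prod.snd ⁻¹' Iic ⟨N, hN, hKN⟩ ∈ u.ult := u.tendsto_snd (hU _)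
  refine hN' ((F.mem_iff_of_le_admFilter (hst u) hN).2 (Ultrafilter.mem_map.2 ?_))
  exact mem_of_superset (Filter.inter_mem hu hsmall) fun a ⟨haP, hPN⟩ => hPN haP

theorem exists_adm_superset_of_forall_satp (hd : F.differentiated) (ht : F.tight) (hc : F.cpt)
    {B : MFp} {p : ℕ} (hB : synOpen B) (hBmono : downMonoP p B) {V : ℕ → Set W}
    (hV : ∀ q, V q ∈ F.adm) (g : ℕ → W) {K : Set W} (hK : F.IsAdmClosed K)
    (hBK : ∀ w, satp F.R (update V p K) g B w) :
    ∃ P ∈ F.adm, K ⊆ P ∧ ∀ w, satp F.R (update V p P) g B w := by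
  by_contra! hfail
  let ι := {P : Set W // P ∈ F.adm ∧ K ⊆ P}
  have : Nonempty ι := ⟨⟨univ, F.univ_mem, subset_univ K⟩⟩
  have : IsDirected ι (· ≥ ·) := ⟨fun i j => ⟨⟨i.1 ∩ j.1, F.inter_mem _ i.2.1 _ j.2.1,
    subset_inter i.2.2 j.2.2⟩, inter_subset_left, inter_subset_right⟩⟩
  let U := Ultrafilter.of (atBot : Filter ι)
  choose wit hwit using fun i : ι => hfail i.1 i.2.1 i.2.2
  choose st hst using fun u : UltraWorld W U => F.exists_le_admFilter hc (u.ult.map Prod.fst)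
  let Vi : ι → ℕ → Set W := fun i => update V p i.1
  have hmono : ultraVal Vi p ⊆ st ⁻¹' update V p K p := fun u hu => by
    simp only [Vi, ultraVal, update_self, mem_ofPred_eq, mem_preimage] at hu ⊢
    exact F.stdPart_mem_of_generic hK (fun j => Ultrafilter.of_le _ (Iic_mem_atBot j)) hst hu
  have hagree : ∀ q ≠ p, st ⁻¹' update V p K q = ultraVal Vi q := fun q hq => by
    ext u
    simp only [Vi, ultraVal, update_of_ne hq, mem_preimage, mem_ofPred_eq]
    exact F.mem_iff_of_le_admFilter (hst u) (hV q)
  let u₀ := UltraWorld.ofFun U wit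
  have hB₀ := hBmono _ _ _ _ _ hmono hagree u₀
    ((F.satp_transfer hst hd ht (update V p K) g B u₀).1 hB (hBK _))
  have hB₀' := (satp_ultra_iff_sumTruth_mem F.R Vi g B u₀).1 hB₀
  obtain ⟨i, hi⟩ := Ultrafilter.nonempty_of_mem (Ultrafilter.mem_map.1 hB₀')
  exact hwit i hi

end GenFrame

/-- Restricted version of Ackermann's Lemma for descriptive frames (and for
Kripke frames, where all sets are admissible). -/
theorem restricted_ackermann {W : Type} (F : GenFrame W)
    (hF : F.descriptive ∨ F.adm = Set.univ)
    (A B : MFp) (p : Nat)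
    (hA : synClosed A) (hAp : ¬ occursP p A)
    (hB : synOpen B) (hBmono : downMonoP p B)
    (V : Nat → Set W) (hV : ∀ q, V q ∈ F.adm) (g : Nat → W) :
    ({w | satp F.R (Function.update V p {u | satp F.R V g A u}) g B w} = Set.univ) ↔
      ∃ P ∈ F.adm, {u | satp F.R V g A u} ⊆ P ∧
        {w | satp F.R (Function.update V p P) g B w} = Set.univ := by
  simp only [eq_univ_iff_forall, mem_ofPred_eq]
  refine ⟨fun hBA => ?_, fun ⟨P, _, hAP, hBP⟩ w => ?_⟩
  · rcases hF with ⟨hd, ht, hc⟩ | hall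
    · exact F.exists_adm_superset_of_forall_satp hd ht hc hB hBmono hV g
        ((F.isAdmClosed_satp hd ht hc hV g A).1 hA) hBA
    · exact ⟨_, hall ▸ mem_univ _, subset_rfl, hBA⟩
  · refine hBmono W F.R _ _ g (by simpa using hAP) (fun q hq => ?_) w (hBP w)
    simp [update_of_ne hq]
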